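/- For every x ∈ S, the Green H-class of x in Σ coincides with the Green H-class of x in the Γ-semigroup S (where H-classes in S are defined via the Γ-analogues of Green's relations: a L b iff {a} ∪ SΓa = {b} ∪ SΓb, a R b iff {a} ∪ aΓS = {b} ∪ bΓS, H = L ∩ R). -/
import Mathlib


open FreeSemigroup

section GammaSemigroup

variable {S Γ : Type}

/-- One-step rewriting on words over S ⊕ Γ. -/
inductive GStep (m : S → Γ → S → S) (γ₀ : Γ) : List (S ⊕ Γ) → List (S ⊕ Γ) → Prop
  | gg (u v : List (S ⊕ Γ)) (γ₁ γ₂ : Γ) :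
      GStep m γ₀ (u ++ Sum.inr γ₁ :: Sum.inr γ₂ :: v) (u ++ Sum.inr γ₁ :: v)
  | xgy (u v : List (S ⊕ Γ)) (x : S) (γ : Γ) (y : S) :
      GStep m γ₀ (u ++ Sum.inl x :: Sum.inr γ :: Sum.inl y :: v) (u ++ Sum.inl (m x γ y) :: v)
  | xy (u v : List (S ⊕ Γ)) (x y : S) :
      GStep m γ₀ (u ++ Sum.inl x :: Sum.inl y :: v) (u ++ Sum.inl (m x γ₀ y) :: v)

/-- The defining relations on the free semigroup on S ⊕ Γ. -/
def GRel (m : S → Γ → S → S) (γ₀ : Γ) :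
    FreeSemigroup (S ⊕ Γ) → FreeSemigroup (S ⊕ Γ) → Prop :=
  fun a b =>
    (∃ γ₁ γ₂ : Γ, a = of (Sum.inr γ₁) * of (Sum.inr γ₂) ∧ b = of (Sum.inr γ₁)) ∨
    (∃ (x y : S) (γ : Γ), a = of (Sum.inl x) * of (Sum.inr γ) * of (Sum.inl y) ∧
      b = of (Sum.inl (m x γ y))) ∨
    (∃ x y : S, a = of (Sum.inl x) * of (Sum.inl y) ∧ b = of (Sum.inl (m x γ₀ y)))

/-- The congruence generated by the defining relations. -/
def GCon (m : S → Γ → S → S) (γ₀ : Γ) : Con (FreeSemigroup (S ⊕ Γ)) := conGen (GRel m γ₀)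

/-- The universal semigroup Σ of the Γ-semigroup S. -/
abbrev USem (m : S → Γ → S → S) (γ₀ : Γ) := (GCon m γ₀).Quotient

/-- The canonical map μ : S → Σ. -/
def gmu (m : S → Γ → S → S) (γ₀ : Γ) (x : S) : USem m γ₀ :=
  ((of (Sum.inl x) : FreeSemigroup (S ⊕ Γ)) : (GCon m γ₀).Quotient)

/-- The canonical map Γ → Σ. -/
def giota (m : S → Γ → S → S) (γ₀ : Γ) (γ : Γ) : USem m γ₀ :=
  ((of (Sum.inr γ) : FreeSemigroup (S ⊕ Γ)) : (GCon m γ₀).Quotient)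

/-- Principal left ideal of an element of a semigroup. -/
def pLeft {T : Type} [Semigroup T] (a : T) : Set T := {w | ∃ t : T, w = t * a} ∪ {a}

/-- Principal right ideal of an element of a semigroup. -/
def pRight {T : Type} [Semigroup T] (a : T) : Set T := {w | ∃ t : T, w = a * t} ∪ {a}

/-- Principal left ideal in the Γ-semigroup: SΓx ∪ {x}. -/
def pLeftG (m : S → Γ → S → S) (x : S) : Set S := {y | ∃ (s : S) (γ : Γ), y = m s γ x} ∪ {x}

/-- Principal right ideal in the Γ-semigroup: xΓS ∪ {x}. -/
def pRightG (m : S → Γ → S → S) (x : S) : Set S := {y | ∃ (γ : Γ) (s : S), y = m x γ s} ∪ {x}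

/-- Green's H relation on the Γ-semigroup. -/
def HrelG (m : S → Γ → S → S) (a b : S) : Prop := pLeftG m a = pLeftG m b ∧ pRightG m a = pRightG m b

/-- S_δ is a simple semigroup: its only two-sided ideal is S itself. -/
def SimpleAt (m : S → Γ → S → S) (δ : Γ) : Prop :=
  ∀ J : Set S, J.Nonempty → (∀ t : S, ∀ j ∈ J, m t δ j ∈ J ∧ m j δ t ∈ J) → J = Set.univ

/-- e is an idempotent of S_δ. -/
def IdemAt (m : S → Γ → S → S) (δ : Γ) (e : S) : Prop := m e δ e = e

/-- e is a primitive idempotent of S_δ. -/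
def PrimAt (m : S → Γ → S → S) (δ : Γ) (e : S) : Prop :=
  IdemAt m δ e ∧ ∀ f, IdemAt m δ f → m e δ f = f → m f δ e = f → f = e

/-- S_δ is completely simple. -/
def CSimpleAt (m : S → Γ → S → S) (δ : Γ) : Prop := SimpleAt m δ ∧ ∃ e, PrimAt m δ e

/-- S_δ has no zero element. -/
def NoZeroAt (m : S → Γ → S → S) (δ : Γ) : Prop := ¬ ∃ z : S, ∀ t : S, m z δ t = z ∧ m t δ z = z

/-- L is a left ideal of S_δ. -/
def LIdealAt (m : S → Γ → S → S) (δ : Γ) (L : Set S) : Prop :=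
  L.Nonempty ∧ ∀ t : S, ∀ l ∈ L, m t δ l ∈ L

/-- L is a minimal left ideal of S_δ. -/
def MinLIdealAt (m : S → Γ → S → S) (δ : Γ) (L : Set S) : Prop :=
  LIdealAt m δ L ∧ ∀ L' ⊆ L, LIdealAt m δ L' → L' = L

/-- S_δ is a group. -/
def GroupAt (m : S → Γ → S → S) (δ : Γ) : Prop :=
  ∃ e : S, (∀ a, m e δ a = a ∧ m a δ e = a) ∧ ∀ a, ∃ b, m a δ b = e ∧ m b δ a = e

/-- G is a subgroup (a sub-semigroup that is a group) of the semigroup T. -/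
def IsSubgroupOf {T : Type} [Semigroup T] (G : Set T) : Prop :=
  (∀ a ∈ G, ∀ b ∈ G, a * b ∈ G) ∧
  ∃ e ∈ G, (∀ g ∈ G, e * g = g ∧ g * e = g) ∧ ∀ g ∈ G, ∃ h ∈ G, g * h = e ∧ h * g = e

/-- The set Σ' = Σ \ Γ. -/
def USem' (m : S → Γ → S → S) (γ₀ : Γ) : Set (USem m γ₀) := {w | ¬ ∃ γ : Γ, w = giota m γ₀ γ}

end GammaSemigroup


section AuxNF
variable {S Γ : Type}

inductive NF (S Γ : Type) : Type
  | g : Γ → NF S Γ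
  | s : S → NF S Γ
  | gs : Γ → S → NF S Γ
  | sg : S → Γ → NF S Γ
  | gsg : Γ → S → Γ → NF S Γ

variable (m : S → Γ → S → S) (γ₀ : Γ)

open NF in
def NF.mul : NF S Γ → NF S Γ → NF S Γ
  | g γ, g _ => g γ
  | g γ, s y => gs γ y
  | g γ, gs _ y => gs γ y
  | g γ, sg y δ => gsg γ y δ
  | g γ, gsg _ y δ' => gsg γ y δ'
  | s x, g δ => sg x δ
  | s x, s y => s (m x γ₀ y)
  | s x, gs δ y => s (m x δ y)
  | s x, sg y δ => sg (m x γ₀ y) δ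
  | s x, gsg δ y δ' => sg (m x δ y) δ'
  | gs γ x, g δ => gsg γ x δ
  | gs γ x, s y => gs γ (m x γ₀ y)
  | gs γ x, gs δ y => gs γ (m x δ y)
  | gs γ x, sg y δ => gsg γ (m x γ₀ y) δ
  | gs γ x, gsg δ y δ' => gsg γ (m x δ y) δ'
  | sg x γ, g _ => sg x γ
  | sg x γ, s y => s (m x γ y)
  | sg x γ, gs _ y => s (m x γ y)
  | sg x γ, sg y δ => sg (m x γ y) δ
  | sg x γ, gsg _ y δ' => sg (m x γ y) δ'
  | gsg γ x γ', g _ => gsg γ x γ'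
  | gsg γ x γ', s y => gs γ (m x γ' y)
  | gsg γ x γ', gs _ y => gs γ (m x γ' y)
  | gsg γ x γ', sg y δ => gsg γ (m x γ' y) δ
  | gsg γ x γ', gsg _ y δ' => gsg γ (m x γ' y) δ'

theorem NF.mul_assoc (assoc : ∀ (a b c : S) (α β : Γ), m (m a α b) β c = m a α (m b β c))
    (a b c : NF S Γ) :
    NF.mul m γ₀ (NF.mul m γ₀ a b) c = NF.mul m γ₀ a (NF.mul m γ₀ b c) := by
  cases a <;> cases b <;> cases c <;> simp [NF.mul, assoc]

def NF.atom : S ⊕ Γ → NF S Γ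
  | Sum.inl x => NF.s x
  | Sum.inr γ => NF.g γ

def phi (a : FreeSemigroup (S ⊕ Γ)) : NF S Γ :=
  a.tail.foldl (fun n l => NF.mul m γ₀ n (NF.atom l)) (NF.atom a.head)

theorem phi_of (l : S ⊕ Γ) : phi m γ₀ (of l) = NF.atom l := rfl

theorem phi_mul (assoc : ∀ (a b c : S) (α β : Γ), m (m a α b) β c = m a α (m b β c))
    (a b : FreeSemigroup (S ⊕ Γ)) :
    phi m γ₀ (a * b) = NF.mul m γ₀ (phi m γ₀ a) (phi m γ₀ b) := by
  have key : ∀ (L : List (S ⊕ Γ)) (n n₀ : NF S Γ),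
      List.foldl (fun n l => NF.mul m γ₀ n (NF.atom l)) (NF.mul m γ₀ n n₀) L =
        NF.mul m γ₀ n (List.foldl (fun n l => NF.mul m γ₀ n (NF.atom l)) n₀ L) := by
    intro L
    induction L with
    | nil => intro n n₀; rfl
    | cons l L ih =>
      intro n n₀
      simp only [List.foldl_cons, NF.mul_assoc m γ₀ assoc, ih]
  show List.foldl _ (NF.atom a.head) (a.tail ++ b.head :: b.tail) = _
  rw [List.foldl_append, List.foldl_cons]
  exact key b.tail (phi m γ₀ a) (NF.atom b.head)

theorem phi_sound (assoc : ∀ (a b c : S) (α β : Γ), m (m a α b) β c = m a α (m b β c))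
    (a b : FreeSemigroup (S ⊕ Γ)) (h : GCon m γ₀ a b) : phi m γ₀ a = phi m γ₀ b := by
  induction h with
  | of x y hr =>
    rcases hr with ⟨γ₁, γ₂, rfl, rfl⟩ | ⟨x, y, γ, rfl, rfl⟩ | ⟨x, y, rfl, rfl⟩ <;>
      simp [phi_mul m γ₀ assoc, phi_of, NF.atom, NF.mul]
  | refl => rfl
  | symm _ ih => exact ih.symm
  | trans _ _ ih₁ ih₂ => exact ih₁.trans ih₂
  | mul _ _ ih₁ ih₂ => rw [phi_mul m γ₀ assoc, phi_mul m γ₀ assoc, ih₁, ih₂]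

def phibar (assoc : ∀ (a b c : S) (α β : Γ), m (m a α b) β c = m a α (m b β c))
    (w : USem m γ₀) : NF S Γ :=
  Con.liftOn w (phi m γ₀) (phi_sound m γ₀ assoc)

variable (assoc : ∀ (a b c : S) (α β : Γ), m (m a α b) β c = m a α (m b β c))

theorem phibar_coe (a : FreeSemigroup (S ⊕ Γ)) :
    phibar m γ₀ assoc (a : USem m γ₀) = phi m γ₀ a := rfl

theorem phibar_mul (w₁ w₂ : USem m γ₀) :
    phibar m γ₀ assoc (w₁ * w₂) =
      NF.mul m γ₀ (phibar m γ₀ assoc w₁) (phibar m γ₀ assoc w₂) := by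
  refine Con.induction_on₂ w₁ w₂ ?_
  intro a b
  rw [← Con.coe_mul, phibar_coe, phibar_coe, phibar_coe, phi_mul m γ₀ assoc]

theorem phibar_gmu (x : S) : phibar m γ₀ assoc (gmu m γ₀ x) = NF.s x := rfl
theorem phibar_giota (γ : Γ) : phibar m γ₀ assoc (giota m γ₀ γ) = NF.g γ := rfl

include assoc in
theorem gmu_inj {x y : S} (h : gmu m γ₀ x = gmu m γ₀ y) : x = y := by
  have := congrArg (phibar m γ₀ assoc) h
  rw [phibar_gmu, phibar_gmu] at this
  exact NF.s.inj this

theorem rel1 (γ₁ γ₂ : Γ) : giota m γ₀ γ₁ * giota m γ₀ γ₂ = giota m γ₀ γ₁ := by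
  simp only [gmu, giota, ← Con.coe_mul]
  exact (Con.eq _).mpr (ConGen.Rel.of _ _ (Or.inl ⟨γ₁, γ₂, rfl, rfl⟩))

theorem rel2 (x y : S) (γ : Γ) :
    gmu m γ₀ x * giota m γ₀ γ * gmu m γ₀ y = gmu m γ₀ (m x γ y) := by
  simp only [gmu, giota, ← Con.coe_mul]
  exact (Con.eq _).mpr (ConGen.Rel.of _ _ (Or.inr (Or.inl ⟨x, y, γ, rfl, rfl⟩)))

theorem rel3 (x y : S) : gmu m γ₀ x * gmu m γ₀ y = gmu m γ₀ (m x γ₀ y) := by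
  simp only [gmu, giota, ← Con.coe_mul]
  exact (Con.eq _).mpr (ConGen.Rel.of _ _ (Or.inr (Or.inr ⟨x, y, rfl, rfl⟩)))

theorem rel1' (γ₁ γ₂ : Γ) (t : USem m γ₀) :
    giota m γ₀ γ₁ * (giota m γ₀ γ₂ * t) = giota m γ₀ γ₁ * t := by
  rw [← mul_assoc, rel1]

theorem rel2a (x y : S) (γ : Γ) :
    gmu m γ₀ x * (giota m γ₀ γ * gmu m γ₀ y) = gmu m γ₀ (m x γ y) := by
  rw [← mul_assoc, rel2]

theorem rel2' (x y : S) (γ : Γ) (t : USem m γ₀) :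
    gmu m γ₀ x * (giota m γ₀ γ * (gmu m γ₀ y * t)) = gmu m γ₀ (m x γ y) * t := by
  rw [← mul_assoc, ← mul_assoc, rel2]

theorem rel3' (x y : S) (t : USem m γ₀) :
    gmu m γ₀ x * (gmu m γ₀ y * t) = gmu m γ₀ (m x γ₀ y) * t := by
  rw [← mul_assoc, rel3]

def psibar : NF S Γ → USem m γ₀
  | NF.g γ => giota m γ₀ γ
  | NF.s x => gmu m γ₀ x
  | NF.gs γ x => giota m γ₀ γ * gmu m γ₀ x
  | NF.sg x γ => gmu m γ₀ x * giota m γ₀ γ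
  | NF.gsg γ x γ' => giota m γ₀ γ * gmu m γ₀ x * giota m γ₀ γ'

theorem psibar_mul (n₁ n₂ : NF S Γ) :
    psibar m γ₀ (NF.mul m γ₀ n₁ n₂) = psibar m γ₀ n₁ * psibar m γ₀ n₂ := by
  cases n₁ <;> cases n₂ <;>
    simp only [psibar, NF.mul, mul_assoc, rel1, rel1', rel2a, rel2', rel3, rel3']

include assoc in
theorem retract (w : USem m γ₀) : psibar m γ₀ (phibar m γ₀ assoc w) = w := by
  refine Con.induction_on w ?_
  intro a
  rw [phibar_coe]
  refine FreeSemigroup.recOnMul a ?_ ?_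
  · intro l; cases l <;> rfl
  · intro l b h1 h2
    rw [phi_mul m γ₀ assoc, psibar_mul, h1, h2, Con.coe_mul]


theorem key_shape (x : S) (n₁ n₂ : NF S Γ)
    (h : NF.mul m γ₀ n₁ (NF.s x) = NF.mul m γ₀ (NF.s x) n₂) :
    ∃ z a γ δ b, NF.mul m γ₀ n₁ (NF.s x) = NF.s z ∧ z = m a γ x ∧ z = m x δ b := by
  cases n₁ <;> cases n₂ <;> simp only [NF.mul, NF.s.injEq] at h <;>
    first
      | exact ⟨_, _, γ₀, γ₀, _, rfl, rfl, h⟩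
      | (rename_i a δ b; exact ⟨_, a, γ₀, δ, b, rfl, rfl, h⟩)
      | (rename_i a γ b; exact ⟨_, a, γ, γ₀, b, rfl, rfl, h⟩)
      | (rename_i a γ δ b; exact ⟨_, a, γ, δ, b, rfl, rfl, h⟩)
      | simp_all

theorem left_decomp (z v : S) (n : NF S Γ)
    (h : NF.mul m γ₀ n (NF.s z) = NF.s v) : ∃ a γ, v = m a γ z := by
  cases n <;> simp only [NF.mul, NF.s.injEq] at h <;>
    first
      | exact ⟨_, γ₀, h.symm⟩
      | (rename_i a γ; exact ⟨a, γ, h.symm⟩)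
      | simp_all

theorem right_decomp (z v : S) (n : NF S Γ)
    (h : NF.mul m γ₀ (NF.s z) n = NF.s v) : ∃ γ b, v = m z γ b := by
  cases n <;> simp only [NF.mul, NF.s.injEq] at h <;>
    first
      | exact ⟨γ₀, _, h.symm⟩
      | (rename_i γ b; exact ⟨γ, b, h.symm⟩)
      | simp_all

include assoc in
theorem pLeftG_subset {z x : S} (h : ∃ a γ, z = m a γ x) : pLeftG m z ⊆ pLeftG m x := by
  obtain ⟨a, γ, rfl⟩ := h
  rintro v (⟨s, γ', rfl⟩ | rfl)
  · exact Or.inl ⟨m s γ' a, γ, (assoc s a x γ' γ).symm⟩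
  · exact Or.inl ⟨a, γ, rfl⟩

include assoc in
theorem pRightG_subset {z x : S} (h : ∃ γ b, z = m x γ b) : pRightG m z ⊆ pRightG m x := by
  obtain ⟨γ, b, rfl⟩ := h
  rintro v (⟨γ', s, rfl⟩ | rfl)
  · exact Or.inl ⟨γ, m b γ' s, assoc x b s γ γ'⟩
  · exact Or.inl ⟨γ, b, rfl⟩

theorem pLeft_mu_mono {a b : S} (h : a ∈ pLeftG m b) :
    pLeft (gmu m γ₀ a) ⊆ pLeft (gmu m γ₀ b) := by
  rcases h with ⟨s, γ, rfl⟩ | rfl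
  · rintro v (⟨t, rfl⟩ | rfl)
    · exact Or.inl ⟨t * (gmu m γ₀ s * giota m γ₀ γ),
        by simp only [← rel2 m γ₀ s b γ, mul_assoc]⟩
    · exact Or.inl ⟨gmu m γ₀ s * giota m γ₀ γ, (rel2 m γ₀ s b γ).symm⟩
  · exact subset_rfl

theorem pRight_mu_mono {a b : S} (h : a ∈ pRightG m b) :
    pRight (gmu m γ₀ a) ⊆ pRight (gmu m γ₀ b) := by
  rcases h with ⟨γ, s, rfl⟩ | rfl
  · rintro v (⟨t, rfl⟩ | rfl)
    · exact Or.inl ⟨giota m γ₀ γ * gmu m γ₀ s * t,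
        by simp only [← rel2 m γ₀ b s γ, mul_assoc]⟩
    · exact Or.inl ⟨giota m γ₀ γ * gmu m γ₀ s,
        by simp only [← rel2 m γ₀ b s γ, mul_assoc]⟩
  · exact subset_rfl

end AuxNF

theorem stmt (S Γ : Type) [Nonempty S] [Nonempty Γ] (m : S → Γ → S → S)
    (assoc : ∀ (a b c : S) (α β : Γ), m (m a α b) β c = m a α (m b β c)) (γ₀ : Γ) (x : S) :
    {w : USem m γ₀ | pLeft w = pLeft (gmu m γ₀ x) ∧ pRight w = pRight (gmu m γ₀ x)} =
      gmu m γ₀ '' {y : S | HrelG m y x} := by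
  ext w
  simp only [Set.mem_setOf_eq, Set.mem_image]
  constructor
  · rintro ⟨hL, hR⟩
    have hwL : w ∈ pLeft (gmu m γ₀ x) := by rw [← hL]; exact Or.inr rfl
    have hwR : w ∈ pRight (gmu m γ₀ x) := by rw [← hR]; exact Or.inr rfl
    rcases hwL with ⟨t, rfl⟩ | rfl
    swap
    · exact ⟨x, ⟨rfl, rfl⟩, rfl⟩
    rcases hwR with ⟨u, hu⟩ | hw
    swap
    · exact ⟨x, ⟨rfl, rfl⟩, hw.symm⟩
    have h1 : phibar m γ₀ assoc (t * gmu m γ₀ x) =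
        NF.mul m γ₀ (phibar m γ₀ assoc t) (NF.s x) := by
      rw [phibar_mul, phibar_gmu]
    have h2 : phibar m γ₀ assoc (t * gmu m γ₀ x) =
        NF.mul m γ₀ (NF.s x) (phibar m γ₀ assoc u) := by
      rw [hu, phibar_mul, phibar_gmu]
    obtain ⟨z, a, γ, δ, b, hz, hza, hzb⟩ :=
      key_shape m γ₀ x _ _ (h1.symm.trans h2)
    have hwz : t * gmu m γ₀ x = gmu m γ₀ z := by
      have h3 := retract m γ₀ assoc (t * gmu m γ₀ x)
      rw [h1, hz] at h3
      exact h3.symm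
    refine ⟨z, ⟨?_, ?_⟩, hwz.symm⟩
    · have hL' : pLeft (gmu m γ₀ z) = pLeft (gmu m γ₀ x) := hwz ▸ hL
      have hx : gmu m γ₀ x ∈ pLeft (gmu m γ₀ z) := by rw [hL']; exact Or.inr rfl
      rcases hx with ⟨t₂, ht₂⟩ | heq
      · have h4 : NF.mul m γ₀ (phibar m γ₀ assoc t₂) (NF.s z) = NF.s x := by
          rw [← phibar_gmu m γ₀ assoc z, ← phibar_mul, ← ht₂, phibar_gmu]
        obtain ⟨a', γ', hx'⟩ := left_decomp m γ₀ z x _ h4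
        exact Set.Subset.antisymm (pLeftG_subset m assoc ⟨a, γ, hza⟩)
          (pLeftG_subset m assoc ⟨a', γ', hx'⟩)
      · rw [gmu_inj m γ₀ assoc heq]
    · have hR' : pRight (gmu m γ₀ z) = pRight (gmu m γ₀ x) := hwz ▸ hR
      have hx : gmu m γ₀ x ∈ pRight (gmu m γ₀ z) := by rw [hR']; exact Or.inr rfl
      rcases hx with ⟨t₂, ht₂⟩ | heq
      · have h4 : NF.mul m γ₀ (NF.s z) (phibar m γ₀ assoc t₂) = NF.s x := by
          rw [← phibar_gmu m γ₀ assoc z, ← phibar_mul, ← ht₂, phibar_gmu]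
        obtain ⟨γ', b', hx'⟩ := right_decomp m γ₀ z x _ h4
        exact Set.Subset.antisymm (pRightG_subset m assoc ⟨δ, b, hzb⟩)
          (pRightG_subset m assoc ⟨γ', b', hx'⟩)
      · rw [gmu_inj m γ₀ assoc heq]
  · rintro ⟨y, ⟨hLy, hRy⟩, rfl⟩
    constructor
    · exact Set.Subset.antisymm
        (pLeft_mu_mono m γ₀ (hLy ▸ (Or.inr rfl : y ∈ pLeftG m y)))
        (pLeft_mu_mono m γ₀ (hLy.symm ▸ (Or.inr rfl : x ∈ pLeftG m x)))
    · exact Set.Subset.antisymm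
        (pRight_mu_mono m γ₀ (hRy ▸ (Or.inr rfl : y ∈ pRightG m y)))
        (pRight_mu_mono m γ₀ (hRy.symm ▸ (Or.inr rfl : x ∈ pRightG m x)))
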